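/- In a two-player game on a finite graph with players Eve and Adam, where Eve's objective is a parity condition Parity(κ) and Adam wins every play (constant payoff 1), the following are equivalent: (1) Eve has a strategy σ_E such that every play compatible with σ_E from v₀ is in Parity(κ); (2) there exists a strong secure equilibrium σ̄ = (σ_E, σ_A) from v₀ in which both Eve and Adam get payoff 1. -/

import Mathlib

/-!
Adam's payoff is constant, so a harmful deviation must harm Eve and hence be a deviation of Adam
alone, which leaves Eve's strategy in place. If that strategy is winning, every outcome compatible
with it is won, so nothing can harm her. Conversely, a losing play compatible with Eve's strategy
is realised by Adam deviating to `followPath`, the strategy that just follows that play.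
-/

namespace Stmt12

noncomputable section
open Classical

/-- A two-player arena: vertices are owned by Eve (`true`) or Adam (`false`). -/
structure Arena (ι V : Type*) where
  owner : V → ι
  E : V → V → Prop
  nosink : ∀ v, ∃ w, E v w

def Strat {ι V : Type*} (G : Arena ι V) :=
  {f : List V → V → V // ∀ h v, G.E v (f h v)}

def histFun {ι V : Type*} (G : Arena ι V) (σ : ι → Strat G) (v0 : V) :
    ℕ → List V × V
  | 0 => ([], v0)
  | n + 1 =>
    let p := histFun G σ v0 n
    (p.1 ++ [p.2], (σ (G.owner p.2)).1 p.1 p.2)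

def play {ι V : Type*} (G : Arena ι V) (σ : ι → Strat G) (v0 : V) : ℕ → V :=
  fun n => (histFun G σ v0 n).2

def combine {ι V : Type*} {G : Arena ι V} (C : Set ι) (σ σ' : ι → Strat G) :
    ι → Strat G :=
  fun i => if i ∈ C then σ' i else σ i

def HarmfulDev {ι V : Type*} (G : Arena ι V) (μ : ι → (ℕ → V) → ℝ)
    (v0 : V) (σ : ι → Strat G) (C : Set ι) (σ' : ι → Strat G) : Prop :=
  (∀ i ∈ C, μ i (play G σ v0) ≤ μ i (play G (combine C σ σ') v0)) ∧
  (∃ j, j ∉ C ∧ μ j (play G (combine C σ σ') v0) < μ j (play G σ v0))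

def IsSSE {ι V : Type*} (G : Arena ι V) (μ : ι → (ℕ → V) → ℝ)
    (v0 : V) (σ : ι → Strat G) : Prop :=
  ¬ ∃ (C : Set ι) (σ' : ι → Strat G), HarmfulDev G μ v0 σ C σ'

def InfOcc {X : Type*} (π : ℕ → X) (v : X) : Prop :=
  ∀ N, ∃ n ≥ N, π n = v

def ParityAccept {X : Type*} (κ : X → ℕ) (π : ℕ → X) : Prop :=
  ∃ v, InfOcc π v ∧ Even (κ v) ∧ ∀ w, InfOcc π w → κ v ≤ κ w

section Plays

variable {ι V : Type*} {G : Arena ι V}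

theorem histFun_fst (σ : ι → Strat G) (v0 : V) (n : ℕ) :
    (histFun G σ v0 n).1 = (List.range n).map (play G σ v0) := by
  induction n with
  | zero => rfl
  | succ n ih =>
    show (histFun G σ v0 n).1 ++ [(histFun G σ v0 n).2] = _
    rw [List.range_succ, List.map_append, ih]
    rfl

theorem play_succ (σ : ι → Strat G) (v0 : V) (n : ℕ) :
    play G σ v0 (n + 1) = (σ (G.owner (play G σ v0 n))).1
      ((List.range n).map (play G σ v0)) (play G σ v0 n) := by
  rw [← histFun_fst]
  rfl

theorem play_edge (σ : ι → Strat G) (v0 : V) (n : ℕ) :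
    G.E (play G σ v0 n) (play G σ v0 (n + 1)) := by
  rw [play_succ]
  exact (σ _).2 _ _

theorem combine_of_mem {C : Set ι} {σ σ' : ι → Strat G} {i : ι} (hi : i ∈ C) :
    combine C σ σ' i = σ' i :=
  if_pos hi

theorem combine_of_not_mem {C : Set ι} {σ σ' : ι → Strat G} {i : ι} (hi : i ∉ C) :
    combine C σ σ' i = σ i :=
  if_neg hi

variable (G) in
def followPath (π : ℕ → V) : Strat G :=
  ⟨fun h v => if G.E v (π (h.length + 1)) then π (h.length + 1) else (G.nosink v).choose,
   fun h v => by
    dsimp only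
    split_ifs with hE
    exacts [hE, (G.nosink v).choose_spec]⟩

theorem play_combine_followPath {C : Set ι} {σ : ι → Strat G} {v0 : V} {π : ℕ → V}
    (h0 : π 0 = v0) (hE : ∀ n, G.E (π n) (π (n + 1)))
    (hσ : ∀ n, G.owner (π n) ∉ C →
      π (n + 1) = (σ (G.owner (π n))).1 ((List.range n).map π) (π n)) :
    play G (combine C σ fun _ => followPath G π) v0 = π := by
  funext n
  induction n using Nat.strong_induction_on with
  | _ n ih =>
    rcases n with _ | n
    · exact h0.symm
    have hn : play G (combine C σ fun _ => followPath G π) v0 n = π n := ih n n.lt_succ_self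
    have hhist : (List.range n).map (play G (combine C σ fun _ => followPath G π) v0)
        = (List.range n).map π :=
      List.map_congr_left fun k hk => ih k ((List.mem_range.mp hk).trans n.lt_succ_self)
    rw [play_succ, hn, hhist]
    by_cases hC : G.owner (π n) ∈ C
    · rw [combine_of_mem hC]
      simp [followPath, hE n]
    · rw [combine_of_not_mem hC, ← hσ n hC]

variable (G) in
def IsWinningFrom (i : ι) (κ : V → ℕ) (v0 : V) (σ : Strat G) : Prop :=
  ∀ π : ℕ → V, π 0 = v0 → (∀ n, G.E (π n) (π (n + 1))) →
    (∀ n, G.owner (π n) = i → π (n + 1) = σ.1 ((List.range n).map π) (π n)) →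
    ParityAccept κ π

theorem IsWinningFrom.parityAccept_play {i : ι} {κ : V → ℕ} {v0 : V} {τ : ι → Strat G}
    (hwin : IsWinningFrom G i κ v0 (τ i)) : ParityAccept κ (play G τ v0) :=
  hwin _ rfl (play_edge τ v0) fun n hn => by rw [play_succ, hn]

end Plays

theorem stmt12_general (V : Type*) (G : Arena Bool V) (v0 : V)
    (κ : V → ℕ)
    (μ : Bool → (ℕ → V) → ℝ)
    (hEve : ∀ π, μ true π = if ParityAccept κ π then 1 else 0)
    (hAdam : ∀ π, μ false π = 1) :
    (∃ σE : Strat G, ∀ π : ℕ → V,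
        π 0 = v0 → (∀ n, G.E (π n) (π (n + 1))) →
        (∀ n, G.owner (π n) = true → π (n + 1) = σE.1 ((List.range n).map π) (π n)) →
        ParityAccept κ π) ↔
    (∃ σ : Bool → Strat G, IsSSE G μ v0 σ ∧
        μ true (play G σ v0) = 1 ∧ μ false (play G σ v0) = 1) := by
  constructor
  · rintro ⟨σE, hwin⟩
    have hacc : ∀ τ : Bool → Strat G, τ true = σE → ParityAccept κ (play G τ v0) :=
      fun τ hτ => IsWinningFrom.parityAccept_play (hτ ▸ hwin)
    refine ⟨fun _ => σE, ?_, by rw [hEve, if_pos (hacc _ rfl)], hAdam _⟩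
    rintro ⟨C, σ', -, j, hj, hlt⟩
    cases j
    · rw [hAdam, hAdam] at hlt
      exact lt_irrefl _ hlt
    · rw [hEve, hEve, if_pos (hacc _ (combine_of_not_mem hj)), if_pos (hacc _ rfl)] at hlt
      exact lt_irrefl _ hlt
  · rintro ⟨σ, hSSE, hE1, -⟩
    refine ⟨σ true, fun π h0 hE hσ => by_contra fun hrej => hSSE ?_⟩
    have hplay : play G (combine {false} σ fun _ => followPath G π) v0 = π :=
      play_combine_followPath h0 hE fun n hn => by
        rw [Set.mem_singleton_iff, Bool.not_eq_false] at hn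
        rw [hn, hσ n hn]
    refine ⟨{false}, fun _ => followPath G π, ?_, true, by simp, ?_⟩
    · rintro i rfl
      rw [hAdam, hAdam]
    · rw [hplay, hEve, if_neg hrej, hE1]
      exact zero_lt_one

/-- In the two-player game where Eve (`true`) has a parity objective and Adam
(`false`) wins every play, Eve has a winning strategy from `v0` iff there is an SSE
from `v0` in which both players get payoff 1. -/
theorem stmt12 (V : Type*) [Fintype V] (G : Arena Bool V) (v0 : V)
    (κ : V → ℕ)
    (μ : Bool → (ℕ → V) → ℝ)
    (hEve : ∀ π, μ true π = if ParityAccept κ π then 1 else 0)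
    (hAdam : ∀ π, μ false π = 1) :
    (∃ σE : Strat G, ∀ π : ℕ → V,
        π 0 = v0 → (∀ n, G.E (π n) (π (n + 1))) →
        (∀ n, G.owner (π n) = true → π (n + 1) = σE.1 ((List.range n).map π) (π n)) →
        ParityAccept κ π) ↔
    (∃ σ : Bool → Strat G, IsSSE G μ v0 σ ∧
        μ true (play G σ v0) = 1 ∧ μ false (play G σ v0) = 1) :=
  stmt12_general V G v0 κ μ hEve hAdam

end
end Stmt12
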